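/- arXiv:0705.3458 — 2 statements merged into one kernel-verified Lean document; each statement's English description precedes it below -/
import Mathlib

section
/- Let Γ be a connected ribbon graph and define q(Γ; t, Y) = C(Γ; 1, Y, tY⁻²), where C is the Bollobás–Riordan polynomial. Then q(Γ; t, Y) is a polynomial in t and Y (i.e., all Y-exponents are nonnegative). -/
open Equiv

noncomputable section

/-- Number of orbits of the map `f` on `α` (the equivalence generated by `i ~ f i`). -/
def orbCountOf {α : Type*} (f : α → α) : ℕ :=
  Nat.card (Quot (fun i j : α => j = f i))

/-- `x` lies on the arc of the cycle of `f` starting at `a` strictly before reaching `b`. -/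
def ReachesBefore {α : Type*} (f : α → α) (a x b : α) : Prop :=
  ∃ m : ℕ, f^[m] a = x ∧ ∀ k ≤ m, f^[k] a ≠ b

/-- The chords `{a,b}` and `{c,d}` of the cycle parametrized by `f` intersect:
exactly one of `c`, `d` lies on the arc from `a` to `b`. -/
def ChordsCross {α : Type*} (f : α → α) (a b c d : α) : Prop :=
  ¬ (ReachesBefore f a c b ↔ ReachesBefore f a d b)

/-- A combinatorial oriented ribbon graph on `2 * n` half-edges, given by a vertex
permutation `σ0` and a fixed-point free involution `σ1` pairing the half-edges
into edges.  Vertices, edges and faces are the orbits of `σ0`, `σ1`, `σ2 = (σ0 σ1)⁻¹`. -/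
structure RibbonGraph (n : ℕ) where
  σ0 : Perm (Fin (2 * n))
  σ1 : Perm (Fin (2 * n))
  invol : σ1 * σ1 = 1
  fixfree : ∀ i, σ1 i ≠ i

namespace RibbonGraph

variable {n : ℕ} (Γ : RibbonGraph n)

/-- The face permutation `σ2 = (σ0 σ1)⁻¹`, so that `σ0 σ1 σ2 = 1`. -/
def σ2 : Perm (Fin (2 * n)) := (Γ.σ0 * Γ.σ1)⁻¹

/-- `Γ` is connected iff the group generated by `σ0, σ1` acts transitively on half-edges. -/
def Connected : Prop :=
  ∀ i j : Fin (2 * n), ∃ g ∈ Subgroup.closure {Γ.σ0, Γ.σ1}, g i = j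

/-- A set `A` of half-edges determines a spanning ribbon subgraph iff it is closed
under the edge involution `σ1`. -/
def Closed (A : Finset (Fin (2 * n))) : Prop := ∀ i ∈ A, Γ.σ1 i ∈ A

/-- The number of vertices (orbits of `σ0`). -/
def vCount : ℕ := orbCountOf Γ.σ0

/-- The number of edges of the spanning subgraph with half-edge set `A`. -/
def eCount (_Γ : RibbonGraph n) (A : Finset (Fin (2 * n))) : ℕ := A.card / 2

/-- Relation whose equivalence classes are the connected components of the spanning
subgraph with half-edge set `A`. -/
def compRel (A : Finset (Fin (2 * n))) (i j : Fin (2 * n)) : Prop :=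
  j = Γ.σ0 i ∨ (i ∈ A ∧ j = Γ.σ1 i)

/-- The number of connected components of the spanning subgraph `A`. -/
def kComp (A : Finset (Fin (2 * n))) : ℕ := Nat.card (Quot (Γ.compRel A))

/-- The boundary map of a regular neighborhood of the spanning subgraph `A` on the
surface of `Γ`: it is `σ0` on half-edges not in `A`, and `σ2⁻¹ = σ0 σ1` on half-edges
in `A`.  Its orbits are the boundary components (faces) of `A`. -/
def bdryMap (A : Finset (Fin (2 * n))) : Fin (2 * n) → Fin (2 * n) :=
  fun i => if i ∈ A then Γ.σ0 (Γ.σ1 i) else Γ.σ0 i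

/-- The number of faces (boundary components `|γ_A|`) of the spanning subgraph `A`. -/
def faces (A : Finset (Fin (2 * n))) : ℕ := orbCountOf (Γ.bdryMap A)

/-- The nullity `n(A) = e(A) - v(Γ) + k(A)` of the spanning subgraph `A`. -/
def nullity (A : Finset (Fin (2 * n))) : ℤ := (Γ.eCount A : ℤ) + Γ.kComp A - Γ.vCount

/-- Twice the genus of the spanning subgraph `A`:
`2 g(A) = 2 k(A) - v(Γ) + e(A) - f(A)`. -/
def twoGenus (A : Finset (Fin (2 * n))) : ℤ :=
  2 * (Γ.kComp A : ℤ) - Γ.vCount + Γ.eCount A - Γ.faces A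

/-- The nullity of `A`, as a natural number. -/
def nullNat (A : Finset (Fin (2 * n))) : ℕ := Γ.eCount A + Γ.kComp A - Γ.vCount

/-- The genus of `A`, as a natural number. -/
def genusNat (A : Finset (Fin (2 * n))) : ℕ :=
  (2 * Γ.kComp A + Γ.eCount A - Γ.vCount - Γ.faces A) / 2

/-- A quasi-tree: a connected spanning ribbon subgraph with exactly one face. -/
def IsQuasiTree (A : Finset (Fin (2 * n))) : Prop :=
  Γ.Closed A ∧ Γ.kComp A = 1 ∧ Γ.faces A = 1

/-- The order of the edge of the half-edge `i`: the minimum of its two half-edge labels. -/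
def edgeOrd (i : Fin (2 * n)) : ℕ := min i.1 (Γ.σ1 i).1

/-- The chords of the edges of `i` and `j` intersect in the ordered chord diagram `C_A`
of the boundary curve `γ_A`. -/
def Crosses (A : Finset (Fin (2 * n))) (i j : Fin (2 * n)) : Prop :=
  ChordsCross (Γ.bdryMap A) i (Γ.σ1 i) j (Γ.σ1 j)

/-- The edge of `i` is live with respect to the quasi-tree `A`: its chord in `C_A`
intersects no lower-ordered chord. -/
def Live (A : Finset (Fin (2 * n))) (i : Fin (2 * n)) : Prop :=
  ∀ j : Fin (2 * n), Γ.edgeOrd j < Γ.edgeOrd i → ¬ Γ.Crosses A i j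

open scoped Classical in
/-- The half-edge set `D(A)` of the internally dead edges of the quasi-tree `A`. -/
noncomputable def deadIn (A : Finset (Fin (2 * n))) : Finset (Fin (2 * n)) :=
  A.filter (fun i => ¬ Γ.Live A i)

open scoped Classical in
/-- The number of externally live edges `|E(A)|` of the quasi-tree `A`. -/
noncomputable def extLiveCount (A : Finset (Fin (2 * n))) : ℕ :=
  (Finset.univ.filter (fun i => i ∉ A ∧ Γ.Live A i)).card / 2

open scoped Classical in
/-- The number of internally live edges `|I(A)|` of the quasi-tree `A`. -/
noncomputable def intLiveCount (A : Finset (Fin (2 * n))) : ℕ :=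
  (A.filter (fun i => Γ.Live A i)).card / 2

open scoped Classical in
/-- The Bollobás–Riordan polynomial of `Γ`, via its spanning subgraph expansion
`C(Γ) = Σ_H (X-1)^(k(H)-1) Y^(n(H)) Z^(g(H))`. -/
noncomputable def BR (X Y Z : ℚ) : ℚ :=
  ∑ A ∈ Finset.univ.filter (fun A : Finset (Fin (2 * n)) => Γ.Closed A),
    (X - 1) ^ (Γ.kComp A - 1) * Y ^ Γ.nullNat A * Z ^ Γ.genusNat A

open scoped Classical in
/-- The set of quasi-trees of `Γ`. -/
noncomputable def quasiTrees : Finset (Finset (Fin (2 * n))) :=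
  Finset.univ.filter (fun A => Γ.IsQuasiTree A)

open scoped Classical in
/-- The Tutte polynomial of the graph `G_A` (vertices: the components of `D(A)`;
edges: the internally live edges of `A`), via its spanning subgraph expansion
`T(x,y) = Σ_W (x-1)^(k(W)-1) (y-1)^(n(W))`.  A spanning subgraph `W` of `G_A`
corresponds to a `σ1`-closed set `S` of internally live half-edges; then
`k(W) = k(D ∪ S)` and `n(W) = k(D ∪ S) + e(S) - k(D)`. -/
noncomputable def TutteGQ (A : Finset (Fin (2 * n))) (x y : ℚ) : ℚ :=
  ∑ S ∈ (A.filter (fun i => Γ.Live A i)).powerset.filter (fun S => Γ.Closed S),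
    (x - 1) ^ (Γ.kComp (Γ.deadIn A ∪ S) - 1) *
      (y - 1) ^ (Γ.kComp (Γ.deadIn A ∪ S) + Γ.eCount S - Γ.kComp (Γ.deadIn A))

/-- A partial resolution assigns `some true` / `some false` / `none` ( `*` )
to half-edges; it should be constant on edges. -/
def EdgeConst (ρ : Fin (2 * n) → Option Bool) : Prop := ∀ i, ρ (Γ.σ1 i) = ρ i

open scoped Classical in
/-- The half-edge set `H_ρ` of the partial resolution `ρ`. -/
noncomputable def Hset (_Γ : RibbonGraph n) (ρ : Fin (2 * n) → Option Bool) : Finset (Fin (2 * n)) :=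
  Finset.univ.filter (fun i => ρ i = some true)

/-- `ρ` is split: `f(H_ρ ∪ U) > 1` for every (σ1-closed) set `U` of unresolved edges. -/
def Split (ρ : Fin (2 * n) → Option Bool) : Prop :=
  ∀ U : Finset (Fin (2 * n)), (∀ i ∈ U, ρ i = none) → (∀ i ∈ U, Γ.σ1 i ∈ U) →
    1 < Γ.faces (Γ.Hset ρ ∪ U)

/-- Resolve the edge of `e` in `ρ` to the value `b`. -/
def resolveEdge (ρ : Fin (2 * n) → Option Bool) (e : Fin (2 * n)) (b : Bool) :
    Fin (2 * n) → Option Bool :=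
  fun i => if i = e ∨ i = Γ.σ1 e then some b else ρ i

/-- The unresolved edge `e` is nugatory in `ρ`: one of its two resolutions is split. -/
def Nugatory (ρ : Fin (2 * n) → Option Bool) (e : Fin (2 * n)) : Prop :=
  Γ.Split (Γ.resolveEdge ρ e false) ∨ Γ.Split (Γ.resolveEdge ρ e true)

/-- `Γ(ρ) = γ_ρ ∪ Int(ρ⁻¹(*))` is connected: the boundary components of `H_ρ`
together with the unresolved edges connect all half-edges. -/
def GammaConn (ρ : Fin (2 * n) → Option Bool) : Prop :=
  ∀ i j : Fin (2 * n),
    Relation.EqvGen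
      (fun x y => y = Γ.bdryMap (Γ.Hset ρ) x ∨ (ρ x = none ∧ y = Γ.σ1 x)) i j

/-- The partial resolution seen at the moment the edge of `e` is considered in the
resolution process: edges of higher order keep their value, the rest are unresolved. -/
def restrictAbove (ρ : Fin (2 * n) → Option Bool) (e : Fin (2 * n)) :
    Fin (2 * n) → Option Bool :=
  fun j => if Γ.edgeOrd e < Γ.edgeOrd j then ρ j else none

/-- `ρ` is a leaf of the binary resolution tree `𝒯`: edges are resolved in decreasing
order, an edge is left unresolved exactly when it is nugatory at its turn. -/
def IsLeaf (ρ : Fin (2 * n) → Option Bool) : Prop :=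
  Γ.EdgeConst ρ ∧
  (∀ i, ρ i = none → Γ.Nugatory (Γ.restrictAbove ρ i) i) ∧
  (∀ i, ρ i ≠ none → ¬ Γ.Nugatory (Γ.restrictAbove ρ i) i)

/-- The spanning subgraph `A` lies in the interval `[ρ]` of the Boolean lattice. -/
def MemInterval (_Γ : RibbonGraph n) (ρ : Fin (2 * n) → Option Bool) (A : Finset (Fin (2 * n))) : Prop :=
  ∀ i, (ρ i = some true → i ∈ A) ∧ (ρ i = some false → i ∉ A)

/-- The pair of half-edges of the edge of `i`. -/
def edgePair (i : Fin (2 * n)) : Finset (Fin (2 * n)) := {i, Γ.σ1 i}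

/-- For a spanning tree `A`, `j ∈ cut(A, i)` (equivalently `i ∈ cyc(A, j)`):
the edge of `j` reconnects `A` minus the edge of `i`. -/
def InCut (A : Finset (Fin (2 * n))) (i j : Fin (2 * n)) : Prop :=
  Γ.kComp ((A \ Γ.edgePair i) ∪ Γ.edgePair j) = 1

/-- Tutte's internal activity: `i ∈ A` is internally active iff it is the
lowest-ordered edge of its cut `cut(A, i)`. -/
def TutteIntActive (A : Finset (Fin (2 * n))) (i : Fin (2 * n)) : Prop :=
  i ∈ A ∧ ∀ j, j ∉ A → Γ.InCut A i j → Γ.edgeOrd i < Γ.edgeOrd j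

/-- Tutte's external activity: `j ∉ A` is externally active iff it is the
lowest-ordered edge of its cycle `cyc(A, j)`. -/
def TutteExtActive (A : Finset (Fin (2 * n))) (j : Fin (2 * n)) : Prop :=
  j ∉ A ∧ ∀ i ∈ A, Γ.InCut A i j → Γ.edgeOrd j < Γ.edgeOrd i

end RibbonGraph

end

/-
At `X = 1` only the subgraphs with `k(H) ≤ 1` survive, and for them
`n(H) - 2g(H) = f(H) - k(H) ≥ 0` (a nonempty graph has a face), so `Y ^ n(H) * (t / Y²) ^ g(H) = t ^ g(H) * Y ^ (n(H) - 2g(H))`.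
-/

lemma div_sq_pow_mul_pow {K : Type*} [Field K] {Y : K} (hY : Y ≠ 0) (t : K) {m g : ℕ}
    (h : 2 * g ≤ m) : Y ^ m * (t / Y ^ 2) ^ g = t ^ g * Y ^ (m - 2 * g) := by
  have hYm : Y ^ m = Y ^ (m - 2 * g) * (Y ^ 2) ^ g := by
    rw [← pow_mul, ← pow_add, Nat.sub_add_cancel h]
  rw [hYm, div_pow]
  field_simp

namespace RibbonGraph

variable {n : ℕ} (Γ : RibbonGraph n) (A : Finset (Fin (2 * n)))

lemma faces_pos_of_kComp_pos (hk : 0 < Γ.kComp A) : 0 < Γ.faces A := by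
  obtain ⟨q⟩ := (Nat.card_pos_iff.mp hk).1
  have : Nonempty (Quot fun i j : Fin (2 * n) => j = Γ.bdryMap A i) :=
    ⟨Quot.mk _ q.out⟩
  have : Finite (Quot fun i j : Fin (2 * n) => j = Γ.bdryMap A i) :=
    Finite.of_surjective _ Quot.mk_surjective
  exact Nat.card_pos

lemma two_mul_genusNat_le_nullNat (hk : Γ.kComp A ≤ 1) :
    2 * Γ.genusNat A ≤ Γ.nullNat A := by
  have hf : 0 < Γ.kComp A → 0 < Γ.faces A := Γ.faces_pos_of_kComp_pos A
  unfold genusNat nullNat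
  omega

noncomputable def qTerm : MvPolynomial (Fin 2) ℚ :=
  if Γ.kComp A ≤ 1 then MvPolynomial.X 0 ^ Γ.genusNat A *
    MvPolynomial.X 1 ^ (Γ.nullNat A - 2 * Γ.genusNat A) else 0

lemma eval_qTerm {t Y : ℚ} (hY : Y ≠ 0) :
    MvPolynomial.eval ![t, Y] (Γ.qTerm A) =
      (1 - 1) ^ (Γ.kComp A - 1) * Y ^ Γ.nullNat A * (t / Y ^ 2) ^ Γ.genusNat A := by
  rw [sub_self, qTerm]
  split_ifs with hk
  · rw [show Γ.kComp A - 1 = 0 by omega, pow_zero, one_mul,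
      div_sq_pow_mul_pow hY t (Γ.two_mul_genusNat_le_nullNat A hk)]
    simp
  · rw [zero_pow (by omega)]
    simp

end RibbonGraph

theorem stmt6_general {n : ℕ} (Γ : RibbonGraph n) :
    ∃ p : MvPolynomial (Fin 2) ℚ, ∀ t Y : ℚ, Y ≠ 0 →
      MvPolynomial.eval ![t, Y] p = Γ.BR 1 Y (t / Y ^ 2) := by
  classical
  refine ⟨∑ A ∈ Finset.univ.filter (fun A => Γ.Closed A), Γ.qTerm A, fun t Y hY => ?_⟩
  rw [RibbonGraph.BR, map_sum]
  exact Finset.sum_congr rfl fun A _ => Γ.eval_qTerm A hY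

/-- `q(Γ; t, Y) = C(Γ; 1, Y, t Y⁻²)` is a polynomial in `t` and `Y`:
there is a two-variable polynomial agreeing with it wherever `Y ≠ 0`. -/
theorem stmt6 {n : ℕ} (hn : 0 < n) (Γ : RibbonGraph n) (hΓ : Γ.Connected) :
    ∃ p : MvPolynomial (Fin 2) ℚ, ∀ t Y : ℚ, Y ≠ 0 →
      MvPolynomial.eval ![t, Y] p = Γ.BR 1 Y (t / Y ^ 2) :=
  stmt6_general Γ
end

section
/- Let Q be a quasi-tree of a connected ribbon graph Γ, let D = D(Q) be the spanning subgraph of internally dead edges, let E(Q) be the externally live edges, and let S = S₁ ∪ S₂ with S₁ a set of internally live edges and S₂ ⊆ E(Q). Then k(D ∪ S) = k(D ∪ S₁), n(D ∪ S) = n(D ∪ S₁) + |S₂|, and g(D ∪ S) = g(D ∪ S₁). -/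
/-
A quasi-tree `A` has a single boundary cycle `γ_A`, and the boundary of any spanning subgraph `B`
arises from `γ_A` by surgery along the chords of the edges of `A ∆ B`. When these edges are live,
their chords are pairwise non-crossing (of two crossing chords, the higher one would cross a lower
one), and surgery along `k` non-crossing chords cuts the cycle into exactly `k + 1` cycles, two
points lying on the same one iff no chord separates them. For `B = D ∪ S₁ ∪ S₂` this gives
`f(B) = f(D ∪ S₁) + |S₂|`. Moreover the chord of an externally live edge `e ∈ S₂` crosses none of
the chords of `A ∆ (D ∪ S₁)`, so both ends of `e` lie on one boundary component of `D ∪ S₁`, hence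
in one connected component, and `k(B) = k(D ∪ S₁)`. Nullity and genus then follow by arithmetic.
-/

open Equiv

open scoped symmDiff

section QuotCard

open Relation

variable {α : Type*}

theorem card_quot_le_of_forall_eqvGen [Finite α] {r s : α → α → Prop}
    (h : ∀ a b, r a b → EqvGen s a b) : Nat.card (Quot s) ≤ Nat.card (Quot r) :=
  Nat.card_le_card_of_surjective
    (Quot.lift (Quot.mk s) fun a b hab => Quot.eqvGen_sound (h a b hab))
    (Quot.ind fun a => ⟨Quot.mk r a, rfl⟩)

theorem card_quot_eq_of_forall_eqvGen [Finite α] {r s : α → α → Prop}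
    (hrs : ∀ a b, r a b → EqvGen s a b) (hsr : ∀ a b, s a b → EqvGen r a b) :
    Nat.card (Quot r) = Nat.card (Quot s) :=
  (card_quot_le_of_forall_eqvGen hsr).antisymm (card_quot_le_of_forall_eqvGen hrs)

theorem card_quot_le_card_quot_or_pair_add_one [Finite α] (r : α → α → Prop) (a b : α) :
    Nat.card (Quot r) ≤ Nat.card (Quot fun u v => r u v ∨ (u = a ∧ v = b)) + 1 := by
  classical
  set r' := fun u v => r u v ∨ (u = a ∧ v = b)
  have hr := EqvGen.is_equivalence r
  let P : α → Prop := fun z => EqvGen r z a ∨ EqvGen r z b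
  have hP : ∀ {x y}, EqvGen r x y → P y → P x := fun hxy hy =>
    hy.imp (hr.trans hxy) (hr.trans hxy)
  -- every `r'`-chain either stays in one `r`-class or passes through the classes of `a` and `b`
  have hequiv : Equivalence fun x y => EqvGen r x y ∨ (P x ∧ P y) :=
    { refl := fun x => Or.inl (hr.refl x)
      symm := fun h => h.imp hr.symm And.symm
      trans := by
        rintro x y z (hxy | ⟨hx, hy⟩) (hyz | ⟨hy', hz⟩)
        · exact Or.inl (hr.trans hxy hyz)
        · exact Or.inr ⟨hP hxy hy', hz⟩
        · exact Or.inr ⟨hx, hP (hr.symm hyz) hy⟩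
        · exact Or.inr ⟨hx, hz⟩ }
  have hr' : ∀ {x y}, EqvGen r' x y → EqvGen r x y ∨ (P x ∧ P y) := fun h =>
    hequiv.eqvGen_iff.mp <| EqvGen.mono (fun u v huv => huv.elim (fun h => Or.inl (.rel _ _ h))
      (fun ⟨hu, hv⟩ => Or.inr ⟨Or.inl (hu ▸ hr.refl _), Or.inr (hv ▸ hr.refl _)⟩)) _ _ h
  let G : Quot r → Option (Quot r') :=
    Quot.lift (fun x => if EqvGen r x a then none else some (Quot.mk r' x)) fun x y hxy => by
      have hiff : EqvGen r x a ↔ EqvGen r y a :=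
        ⟨hr.trans (hr.symm (.rel _ _ hxy)), hr.trans (.rel _ _ hxy)⟩
      simp only [hiff]
      split_ifs
      · rfl
      · exact congrArg some (Quot.sound (Or.inl hxy))
  have hG : Function.Injective G := by
    refine Quot.ind fun x => Quot.ind fun y hxy => Quot.eqvGen_sound ?_
    by_cases hx : EqvGen r x a <;> by_cases hy : EqvGen r y a <;>
      simp only [G, hx, hy, if_true, if_false, reduceCtorEq, Option.some.injEq] at hxy
    · exact hr.trans hx (hr.symm hy)
    · rcases hr' (Quot.eqvGen_exact hxy) with h | ⟨hbx, hby⟩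
      · exact h
      · exact hr.trans (hbx.resolve_left hx) (hr.symm (hby.resolve_left hy))
  calc Nat.card (Quot r) ≤ Nat.card (Option (Quot r')) := Nat.card_le_card_of_injective G hG
    _ = Nat.card (Quot r') + 1 := Finite.card_option

end QuotCard

section Orbits

open Function Relation Equiv

variable {α β : Type*}

def SameOrbit (f : α → α) (x y : α) : Prop := EqvGen (fun i j => j = f i) x y

theorem orbCountOf_comp_swap_le [Finite α] [DecidableEq α] (f : α → α) (a b : α) :
    orbCountOf (f ∘ swap a b) ≤ orbCountOf f + 1 := by
  let join (g : α → α) : α → α → Prop := fun u v => v = g u ∨ (u = a ∧ v = b)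
  have hab : ∀ g, EqvGen (join g) a b := fun g => .rel _ _ (Or.inr ⟨rfl, rfl⟩)
  -- once `a` and `b` are identified, `g` and `g ∘ swap a b` have the same orbits
  have hjoin : ∀ g h : α → α, (∀ u, h u = g (swap a b u)) →
      ∀ u v, join h u v → EqvGen (join g) u v := by
    rintro g h hgh u v (rfl | hp)
    · rw [hgh]
      by_cases hua : u = a
      · subst hua
        exact (hab g).trans _ _ _ (.rel _ _ (Or.inl (by rw [swap_apply_left])))
      by_cases hub : u = b
      · subst hub
        exact (hab g).symm.trans _ _ _ (.rel _ _ (Or.inl (by rw [swap_apply_right])))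
      · exact .rel _ _ (Or.inl (by rw [swap_apply_of_ne_of_ne hua hub]))
    · exact .rel _ _ (Or.inr hp)
  calc orbCountOf (f ∘ swap a b) ≤ Nat.card (Quot (join (f ∘ swap a b))) + 1 :=
        card_quot_le_card_quot_or_pair_add_one _ a b
    _ = Nat.card (Quot (join f)) + 1 := by
        rw [card_quot_eq_of_forall_eqvGen (hjoin f (f ∘ swap a b) fun _ => rfl)
          (hjoin _ f fun u => by simp)]
    _ ≤ orbCountOf f + 1 :=
        Nat.add_le_add_right (card_quot_le_of_forall_eqvGen fun u v h => .rel _ _ (Or.inl h)) 1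

theorem sameOrbit_of_orbCountOf_eq_one {f : α → α} (h : orbCountOf f = 1) (x y : α) :
    SameOrbit f x y :=
  have : Subsingleton (Quot fun i j => j = f i) := (Nat.card_eq_one_iff_unique.mp h).1
  Quot.eqvGen_exact (Subsingleton.elim _ _)

theorem orbCountOf_conj (e : α ≃ β) (f : α → α) : orbCountOf (e ∘ f ∘ e.symm) = orbCountOf f :=
  (Nat.card_congr (Quot.congr e fun a b => by simp [e.apply_eq_iff_eq])).symm

theorem SameOrbit.conj (e : α ≃ β) {f : α → α} {x y : α} (h : SameOrbit f x y) :
    SameOrbit (e ∘ f ∘ e.symm) (e x) (e y) := by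
  have hmk := congrArg (Quot.congr (rb := fun i j => j = (e ∘ f ∘ e.symm) i) e
    fun a b => by simp [e.apply_eq_iff_eq]) (Quot.eqvGen_sound (r := fun i j => j = f i) h)
  rw [Quot.congr_mk, Quot.congr_mk] at hmk
  exact Quot.eqvGen_exact hmk

theorem SameOrbit.exists_iterate_eq [Finite α] {f : α → α} (hf : Bijective f) {x y : α}
    (h : SameOrbit f x y) : ∃ m : ℕ, f^[m] x = y := by
  set P : Perm α := Equiv.ofBijective f hf
  have hcycle : P.SameCycle x y := by
    induction h with
    | rel u v huv => exact ⟨1, by simp [P, huv]⟩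
    | refl u => exact .refl _ _
    | symm u v _ ih => exact ih.symm
    | trans u v w _ _ ih1 ih2 => exact ih1.trans ih2
  obtain ⟨m, hm⟩ := hcycle.exists_nat_pow_eq
  exact ⟨m, by rwa [← Perm.iterate_eq_pow] at hm⟩

theorem exists_equiv_fin_semiconj_add_one {f : α → α} {x₀ : α} (hx₀ : x₀ ∈ periodicPts f)
    (hreach : ∀ y, ∃ m : ℕ, f^[m] x₀ = y) :
    ∃ (p : ℕ) (_ : NeZero p) (e : Fin p ≃ α), Semiconj e (· + 1) f := by
  set p := minimalPeriod f x₀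
  have hp : NeZero p := ⟨(minimalPeriod_pos_of_mem_periodicPts hx₀).ne'⟩
  have hbij : Bijective fun m : Fin p => f^[m] x₀ := by
    refine ⟨fun a b hab => Fin.ext (iterate_injOn_Iio_minimalPeriod a.isLt b.isLt hab),
      fun y => ?_⟩
    obtain ⟨m, rfl⟩ := hreach y
    exact ⟨⟨m % p, Nat.mod_lt _ hp.pos⟩, iterate_mod_minimalPeriod_eq⟩
  refine ⟨p, hp, Equiv.ofBijective _ hbij, fun m => ?_⟩
  have hval : ((m + 1 : Fin p) : ℕ) = (m + 1) % p := by
    rw [Fin.val_add, Fin.val_one', Nat.add_mod_mod]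
  rw [Equiv.ofBijective_apply, Equiv.ofBijective_apply, hval, iterate_mod_minimalPeriod_eq,
    iterate_succ_apply']

end Orbits

namespace Fin

open Equiv Relation Finset

variable {N : ℕ}

theorem val_sub_add_val_eq_or (a b : Fin N) :
    (a - b).val + b.val = a.val ∧ b.val ≤ a.val ∨
      (a - b).val + b.val = a.val + N ∧ a.val < b.val := by
  rw [Fin.val_sub]
  have := a.isLt
  have := b.isLt
  rcases Nat.lt_or_ge (N - b + a) N with h | h
  · rw [Nat.mod_eq_of_lt h]; omega
  · rw [Nat.mod_eq_sub_mod h, Nat.mod_eq_of_lt (by omega)]; omega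

theorem val_add_one_eq_or [NeZero N] (w : Fin N) :
    (w + 1).val = w.val + 1 ∨ ((w + 1).val = 0 ∧ w.val + 1 = N) := by
  rw [Fin.val_add, Fin.val_one']
  have := w.isLt
  rcases Nat.lt_or_ge 1 N with hN | hN
  · rw [Nat.mod_eq_of_lt hN]
    rcases Nat.lt_or_ge (w.val + 1) N with h | h
    · rw [Nat.mod_eq_of_lt h]; omega
    · rw [show w.val + 1 = N by omega, Nat.mod_self]; omega
  · obtain rfl : N = 1 := by have := NeZero.pos N; omega
    have := (w + 1).isLt
    omega

/-- `w` lies on the half-open arc `(x, x']` of the cycle `Fin N`. -/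
def SideOf (x x' w : Fin N) : Prop :=
  0 < (w - x).val ∧ (w - x).val ≤ (x' - x).val

instance (x x' w : Fin N) : Decidable (SideOf x x' w) := by
  unfold SideOf; infer_instance

theorem sideOf_iff_lt {x x' w : Fin N} (h1 : w ≠ x) (h2 : w ≠ x') :
    SideOf x x' w ↔ (w - x).val < (x' - x).val := by
  have := val_sub_add_val_eq_or w x
  have := val_sub_add_val_eq_or x' x
  have := val_ne_of_ne h1
  have := val_ne_of_ne h2
  unfold SideOf
  omega

theorem not_sideOf_self (x x' : Fin N) : ¬ SideOf x x' x := by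
  have := val_sub_add_val_eq_or x x
  unfold SideOf
  omega

theorem sideOf_right {x x' : Fin N} (h : x ≠ x') : SideOf x x' x' := by
  have := val_sub_add_val_eq_or x' x
  have := val_ne_of_ne h
  unfold SideOf
  omega

theorem sideOf_add_one_iff [NeZero N] {y y' w : Fin N} (h1 : w ≠ y) (h2 : w ≠ y') :
    SideOf y y' (w + 1) ↔ SideOf y y' w := by
  have := val_sub_add_val_eq_or (w + 1) y
  have := val_sub_add_val_eq_or w y
  have := val_sub_add_val_eq_or y' y
  have := val_add_one_eq_or w
  have := val_ne_of_ne h1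
  have := val_ne_of_ne h2
  unfold SideOf
  omega

theorem sideOf_right_add_one_iff [NeZero N] {x x' : Fin N} (h : x ≠ x') :
    SideOf x x' (x' + 1) ↔ SideOf x x' x := by
  have := val_sub_add_val_eq_or (x' + 1) x
  have := val_sub_add_val_eq_or x' x
  have := val_sub_add_val_eq_or x x
  have := val_add_one_eq_or x'
  have := val_ne_of_ne h
  unfold SideOf
  omega

theorem sideOf_left_add_one_iff [NeZero N] {x x' : Fin N} (h : x ≠ x') :
    SideOf x x' (x + 1) ↔ SideOf x x' x' := by
  have := val_sub_add_val_eq_or (x + 1) x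
  have := val_sub_add_val_eq_or x' x
  have := val_add_one_eq_or x
  have := val_ne_of_ne h
  unfold SideOf
  omega

theorem sideOf_comm {x x' y y' : Fin N} (hxx : x ≠ x') (hyy : y ≠ y')
    (h1 : x ≠ y) (h2 : x ≠ y') (h3 : x' ≠ y) (h4 : x' ≠ y')
    (h : SideOf x x' y ↔ SideOf x x' y') : SideOf y y' x ↔ SideOf y y' x' := by
  have := val_sub_add_val_eq_or x y
  have := val_sub_add_val_eq_or x' y
  have := val_sub_add_val_eq_or y' y
  have := val_sub_add_val_eq_or y x
  have := val_sub_add_val_eq_or y' x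
  have := val_sub_add_val_eq_or x' x
  have := val_ne_of_ne hxx
  have := val_ne_of_ne hyy
  have := val_ne_of_ne h1
  have := val_ne_of_ne h2
  have := val_ne_of_ne h3
  have := val_ne_of_ne h4
  unfold SideOf at *
  omega

theorem val_sub_lt_val_sub_iff_not {a b : Fin N} (hab : a ≠ b) (w : Fin N) :
    (w - a).val < (b - a).val ↔ ¬ (w - b).val < (a - b).val := by
  have := val_sub_add_val_eq_or w a
  have := val_sub_add_val_eq_or b a
  have := val_sub_add_val_eq_or w b
  have := val_sub_add_val_eq_or a b
  have := val_ne_of_ne hab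
  omega

theorem sideOf_iff_of_split {x x' y y' u w : Fin N} (hxx : x ≠ x') (hyy : y ≠ y')
    (h1 : x ≠ y) (h2 : x ≠ y') (h3 : x' ≠ y) (h4 : x' ≠ y')
    (hnc : SideOf y y' x ↔ SideOf y y' x')
    (huw : SideOf y y' u ↔ SideOf y y' w)
    (hsp : ¬ (SideOf x x' u ↔ SideOf x x' w)) :
    SideOf y y' u ↔ SideOf y y' x := by
  have := val_sub_add_val_eq_or u x
  have := val_sub_add_val_eq_or w x
  have := val_sub_add_val_eq_or x' x
  have := val_sub_add_val_eq_or u y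
  have := val_sub_add_val_eq_or w y
  have := val_sub_add_val_eq_or x y
  have := val_sub_add_val_eq_or x' y
  have := val_sub_add_val_eq_or y' y
  have := val_ne_of_ne hxx
  have := val_ne_of_ne hyy
  have := val_ne_of_ne h1
  have := val_ne_of_ne h2
  have := val_ne_of_ne h3
  have := val_ne_of_ne h4
  unfold SideOf at *
  omega

open Fin.NatCast in
theorem orbCountOf_add_one [NeZero N] : orbCountOf (fun w : Fin N => w + 1) = 1 := by
  refine Nat.card_eq_one_iff_exists.mpr ⟨Quot.mk _ 0, Quot.ind fun w => ?_⟩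
  rw [← Fin.cast_val_eq_self w]
  induction w.val with
  | zero => simp
  | succ k ih => rw [← ih, Nat.cast_succ]; exact (Quot.sound (r := fun i j => j = i + 1) rfl).symm

def ChordsApart (c d : Fin N × Fin N) : Prop :=
  c.1 ≠ d.1 ∧ c.1 ≠ d.2 ∧ c.2 ≠ d.1 ∧ c.2 ≠ d.2 ∧
    (SideOf c.1 c.2 d.1 ↔ SideOf c.1 c.2 d.2) ∧ (SideOf d.1 d.2 c.1 ↔ SideOf d.1 d.2 c.2)

theorem ChordsApart.symm {c d : Fin N × Fin N} (h : ChordsApart c d) : ChordsApart d c :=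
  let ⟨h1, h2, h3, h4, h5, h6⟩ := h
  ⟨h1.symm, h3.symm, h2.symm, h4.symm, h6, h5⟩

instance : Std.Symm (ChordsApart (N := N)) := ⟨fun _ _ => ChordsApart.symm⟩

def IsNoncrossing (L : List (Fin N × Fin N)) : Prop :=
  (∀ c ∈ L, c.1 ≠ c.2) ∧ L.Pairwise ChordsApart

def chordSwap (L : List (Fin N × Fin N)) : Perm (Fin N) :=
  (L.map fun c => swap c.1 c.2).prod

def surgery [NeZero N] (L : List (Fin N × Fin N)) (w : Fin N) : Fin N :=
  chordSwap L w + 1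

def sideVector (L : List (Fin N × Fin N)) (w : Fin N) : List Bool :=
  L.map fun c => decide (SideOf c.1 c.2 w)

theorem sideVector_cons (c : Fin N × Fin N) (L : List (Fin N × Fin N)) (w : Fin N) :
    sideVector (c :: L) w = decide (SideOf c.1 c.2 w) :: sideVector L w := rfl

theorem chordSwap_cons (c : Fin N × Fin N) (L : List (Fin N × Fin N)) :
    chordSwap (c :: L) = swap c.1 c.2 * chordSwap L := by
  simp [chordSwap]

theorem IsNoncrossing.of_cons {c : Fin N × Fin N} {L : List (Fin N × Fin N)}
    (h : IsNoncrossing (c :: L)) : IsNoncrossing L :=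
  ⟨fun d hd => h.1 d (List.mem_cons_of_mem _ hd), (List.pairwise_cons.mp h.2).2⟩

theorem IsNoncrossing.apart_of_cons {c d : Fin N × Fin N} {L : List (Fin N × Fin N)}
    (h : IsNoncrossing (c :: L)) (hd : d ∈ L) : ChordsApart c d :=
  (List.pairwise_cons.mp h.2).1 d hd

theorem IsNoncrossing.apart {c d : Fin N × Fin N} {L : List (Fin N × Fin N)}
    (hL : IsNoncrossing L) (hc : c ∈ L) (hd : d ∈ L) (hcd : c ≠ d) : ChordsApart c d :=
  hL.2.forall hc hd hcd

theorem chordSwap_apply_of_forall_ne {L : List (Fin N × Fin N)} {w : Fin N}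
    (h : ∀ c ∈ L, w ≠ c.1 ∧ w ≠ c.2) : chordSwap L w = w := by
  induction L with
  | nil => rfl
  | cons c L ih =>
    obtain ⟨h1, h2⟩ := h c List.mem_cons_self
    rw [chordSwap_cons, Perm.mul_apply, ih fun d hd => h d (List.mem_cons_of_mem _ hd),
      swap_apply_of_ne_of_ne h1 h2]

theorem IsNoncrossing.chordSwap_apply {L : List (Fin N × Fin N)} (hL : IsNoncrossing L)
    {c : Fin N × Fin N} (hc : c ∈ L) : chordSwap L c.1 = c.2 ∧ chordSwap L c.2 = c.1 := by
  induction L with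
  | nil => exact absurd hc List.not_mem_nil
  | cons d L ih =>
    rw [chordSwap_cons, Perm.mul_apply, Perm.mul_apply]
    rcases List.mem_cons.mp hc with rfl | hc
    · have hfix : ∀ w, w = c.1 ∨ w = c.2 → chordSwap L w = w := by
        rintro w hw
        refine chordSwap_apply_of_forall_ne fun d hd => ?_
        obtain ⟨h1, h2, h3, h4, -⟩ := hL.apart_of_cons hd
        rcases hw with rfl | rfl <;> tauto
      rw [hfix _ (Or.inl rfl), hfix _ (Or.inr rfl), swap_apply_left, swap_apply_right]
      exact ⟨rfl, rfl⟩
    · obtain ⟨h1, h2, h3, h4, -⟩ := hL.apart_of_cons hc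
      obtain ⟨e1, e2⟩ := ih hL.of_cons hc
      rw [e1, e2, swap_apply_of_ne_of_ne h2.symm h4.symm, swap_apply_of_ne_of_ne h1.symm h3.symm]
      exact ⟨rfl, rfl⟩

theorem IsNoncrossing.surgery_cons [NeZero N] {c : Fin N × Fin N} {L : List (Fin N × Fin N)}
    (hL : IsNoncrossing (c :: L)) : surgery (c :: L) = surgery L ∘ swap c.1 c.2 := by
  have hcomm : Commute (swap c.1 c.2) (chordSwap L) := by
    refine Perm.Disjoint.commute fun w => ?_
    by_cases hw : w = c.1 ∨ w = c.2
    · refine Or.inr (chordSwap_apply_of_forall_ne fun d hd => ?_)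
      obtain ⟨h1, h2, h3, h4, -⟩ := hL.apart_of_cons hd
      rcases hw with rfl | rfl <;> tauto
    · obtain ⟨h1, h2⟩ := not_or.mp hw
      exact Or.inl (swap_apply_of_ne_of_ne h1 h2)
  funext w
  simp only [surgery, Function.comp_apply, chordSwap_cons, hcomm.eq, Perm.mul_apply]

theorem IsNoncrossing.sideVector_surgery [NeZero N] {L : List (Fin N × Fin N)}
    (hL : IsNoncrossing L) (w : Fin N) : sideVector L (surgery L w) = sideVector L w := by
  refine List.map_congr_left fun d hd => decide_eq_decide.mpr ?_
  by_cases hw : ∃ c ∈ L, w = c.1 ∨ w = c.2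
  · obtain ⟨c, hc, hwc⟩ := hw
    obtain ⟨hc1, hc2⟩ := hL.chordSwap_apply hc
    by_cases hdc : d = c
    · subst hdc
      rcases hwc with rfl | rfl
      · rw [surgery, hc1]; exact sideOf_right_add_one_iff (hL.1 d hc)
      · rw [surgery, hc2]; exact sideOf_left_add_one_iff (hL.1 d hc)
    · obtain ⟨h1, h2, h3, h4, h5, -⟩ := hL.apart hd hc hdc
      rcases hwc with rfl | rfl
      · rw [surgery, hc1, sideOf_add_one_iff h2.symm h4.symm]; exact h5.symm
      · rw [surgery, hc2, sideOf_add_one_iff h1.symm h3.symm]; exact h5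
  · have hne : ∀ c ∈ L, w ≠ c.1 ∧ w ≠ c.2 := fun c hc => not_or.mp fun h => hw ⟨c, hc, h⟩
    rw [surgery, chordSwap_apply_of_forall_ne hne]
    exact sideOf_add_one_iff (hne d hd).1 (hne d hd).2

theorem IsNoncrossing.orbCountOf_surgery_le [NeZero N] {L : List (Fin N × Fin N)}
    (hL : IsNoncrossing L) : orbCountOf (surgery L) ≤ L.length + 1 := by
  classical
  induction L with
  | nil => exact (orbCountOf_add_one (N := N)).le
  | cons c L ih =>
    rw [hL.surgery_cons, List.length_cons]
    exact (orbCountOf_comp_swap_le _ _ _).trans (Nat.add_le_add_right (ih hL.of_cons) 1)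

/-- A chord not crossing those of `L` only splits the region of `L` containing its endpoints. -/
theorem IsNoncrossing.sideVector_cons_eq {c : Fin N × Fin N} {L : List (Fin N × Fin N)}
    (hL : IsNoncrossing (c :: L)) {u w : Fin N} (huw : sideVector L u = sideVector L w)
    (hu : sideVector L u ≠ sideVector L c.1) :
    sideVector (c :: L) u = sideVector (c :: L) w := by
  rw [sideVector_cons, sideVector_cons, huw, decide_eq_decide.mpr]
  by_contra hsplit
  refine hu (List.map_congr_left fun d hd => decide_eq_decide.mpr ?_)
  obtain ⟨h1, h2, h3, h4, -, h6⟩ := hL.apart_of_cons hd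
  exact sideOf_iff_of_split (hL.1 c List.mem_cons_self) (hL.of_cons.1 d hd) h1 h2 h3 h4 h6
    (decide_eq_decide.mp (List.map_eq_map_iff.mp huw d hd)) hsplit

theorem IsNoncrossing.card_filter_tail_eq {c : Fin N × Fin N} {L : List (Fin N × Fin N)}
    (hL : IsNoncrossing (c :: L)) (w : Fin N) :
    #{l ∈ univ.image (sideVector (c :: L)) | l.tail = sideVector L w} =
      if sideVector L w = sideVector L c.1 then 2 else 1 := by
  classical
  split_ifs with hw
  · have hc2 : sideVector L c.2 = sideVector L c.1 :=
      List.map_congr_left fun d hd => decide_eq_decide.mpr (hL.apart_of_cons hd).2.2.2.2.2.symm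
    rw [← card_pair (a := false :: sideVector L c.1) (b := true :: sideVector L c.1) (by simp)]
    congr 1
    ext l
    simp only [mem_filter, mem_image, mem_univ, true_and, mem_insert, mem_singleton, hw]
    constructor
    · rintro ⟨⟨u, rfl⟩, hu⟩
      rw [sideVector_cons, List.tail_cons] at hu
      rw [sideVector_cons, hu]
      cases decide (SideOf c.1 c.2 u) <;> simp
    · rintro (rfl | rfl)
      · exact ⟨⟨c.1, by simp [sideVector_cons, not_sideOf_self]⟩, rfl⟩
      · exact ⟨⟨c.2, by simp [sideVector_cons, sideOf_right (hL.1 c List.mem_cons_self), hc2]⟩,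
          rfl⟩
  · rw [card_eq_one]
    refine ⟨sideVector (c :: L) w, ext fun l => ?_⟩
    simp only [mem_filter, mem_image, mem_univ, true_and, mem_singleton]
    constructor
    · rintro ⟨⟨u, rfl⟩, hu⟩
      rw [sideVector_cons, List.tail_cons] at hu
      exact hL.sideVector_cons_eq hu (hu ▸ hw)
    · rintro rfl
      exact ⟨⟨w, rfl⟩, rfl⟩

theorem IsNoncrossing.card_image_sideVector [NeZero N] {L : List (Fin N × Fin N)}
    (hL : IsNoncrossing L) :
    #(univ.image (sideVector L)) = L.length + 1 := by
  classical
  induction L with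
  | nil => rw [show sideVector ([] : List (Fin N × Fin N)) = fun _ => [] from rfl,
      image_const univ_nonempty, card_singleton, List.length_nil]
  | cons c L ih =>
    set I := univ.image (sideVector L)
    have hc : sideVector L c.1 ∈ I := mem_image_of_mem _ (mem_univ _)
    have hmaps : Set.MapsTo List.tail (univ.image (sideVector (c :: L)) : Set (List Bool))
        (I : Set (List Bool)) := by
      simp [Set.MapsTo, I, sideVector_cons]
    have hfib : ∀ v ∈ I, #{l ∈ univ.image (sideVector (c :: L)) | l.tail = v} =
        if v = sideVector L c.1 then 2 else 1 := by
      simp only [I, mem_image, mem_univ, true_and]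
      rintro _ ⟨w, rfl⟩
      exact hL.card_filter_tail_eq w
    rw [card_eq_sum_card_fiberwise hmaps, sum_congr rfl hfib, ← add_sum_erase _ _ hc, if_pos rfl,
      sum_congr rfl fun v hv => if_neg (ne_of_mem_erase hv), ← card_eq_sum_ones,
      card_erase_of_mem hc, ih hL.of_cons, List.length_cons]
    omega

section Surgery

variable [NeZero N] {L : List (Fin N × Fin N)}

def IsNoncrossing.orbitSideVector (hL : IsNoncrossing L) :
    Quot (fun i j => j = surgery L i) → univ.image (sideVector L) :=
  Quot.lift (fun w => ⟨sideVector L w, mem_image_of_mem _ (mem_univ w)⟩) fun u _ h =>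
    Subtype.ext (h ▸ hL.sideVector_surgery u).symm

theorem IsNoncrossing.surjective_orbitSideVector (hL : IsNoncrossing L) :
    Function.Surjective hL.orbitSideVector := by
  rintro ⟨l, hl⟩
  obtain ⟨w, -, rfl⟩ := mem_image.mp hl
  exact ⟨Quot.mk _ w, rfl⟩

theorem IsNoncrossing.orbCountOf_surgery (hL : IsNoncrossing L) :
    orbCountOf (surgery L) = L.length + 1 := by
  refine hL.orbCountOf_surgery_le.antisymm ?_
  rw [← hL.card_image_sideVector, ← Nat.card_eq_finsetCard]
  exact Nat.card_le_card_of_surjective _ hL.surjective_orbitSideVector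

theorem IsNoncrossing.sameOrbit_of_sideVector_eq (hL : IsNoncrossing L) {u v : Fin N}
    (h : sideVector L u = sideVector L v) : SameOrbit (surgery L) u v := by
  have hbij : Function.Bijective hL.orbitSideVector := by
    refine (Nat.bijective_iff_surjective_and_card _).mpr ⟨hL.surjective_orbitSideVector, ?_⟩
    rw [Nat.card_eq_finsetCard, hL.card_image_sideVector, ← hL.orbCountOf_surgery]
    rfl
  exact Quot.eqvGen_exact (hbij.injective (Subtype.ext h))

end Surgery

end Fin

section CycleParametrization

open Function Equiv Fin

variable {α : Type*} {p : ℕ} [NeZero p] {f : α → α} {e : Fin p ≃ α}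

open Fin.NatCast in
theorem Function.Semiconj.reachesBefore_iff (he : Semiconj e (· + 1) f) (x y z : α) :
    ReachesBefore f x y z ↔ (e.symm y - e.symm x).val < (e.symm z - e.symm x).val := by
  have hiter : ∀ (k : ℕ) (i : Fin p), f^[k] (e i) = e (i + k) := by
    intro k i
    rw [← (he.iterate_right k) i]
    congr 1
    induction k with
    | zero => simp
    | succ k ih => rw [iterate_succ_apply', ih, Nat.cast_succ, add_assoc]
  obtain ⟨i, rfl⟩ := e.surjective x
  obtain ⟨j, rfl⟩ := e.surjective y
  obtain ⟨l, rfl⟩ := e.surjective z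
  simp only [Equiv.symm_apply_apply, ReachesBefore, hiter, e.apply_eq_iff_eq]
  constructor
  · rintro ⟨m, rfl, hk⟩
    by_contra! hc
    refine hk (l - i).val ?_ (by rw [Fin.cast_val_eq_self, add_sub_cancel])
    have : ((i + m - i : Fin p) : ℕ) ≤ m := by
      rw [add_sub_cancel_left, Fin.val_natCast]; exact Nat.mod_le m p
    omega
  · intro hlt
    refine ⟨(j - i).val, by rw [Fin.cast_val_eq_self, add_sub_cancel], fun k hk heq => ?_⟩
    have hkl : (k : Fin p) = l - i := by rw [← e.injective heq, add_sub_cancel_left]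
    have hkp : k < p := by have := (l - i).isLt; omega
    rw [← hkl, Fin.val_natCast, Nat.mod_eq_of_lt hkp] at hlt
    omega

theorem Function.Semiconj.not_chordsCross_iff (he : Semiconj e (· + 1) f) {x x' y y' : α}
    (h1 : y ≠ x) (h2 : y ≠ x') (h3 : y' ≠ x) (h4 : y' ≠ x') :
    ¬ ChordsCross f x x' y y' ↔
      (SideOf (e.symm x) (e.symm x') (e.symm y) ↔ SideOf (e.symm x) (e.symm x') (e.symm y')) := by
  rw [ChordsCross, not_not, he.reachesBefore_iff, he.reachesBefore_iff,
    sideOf_iff_lt (e.symm.injective.ne h1) (e.symm.injective.ne h2),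
    sideOf_iff_lt (e.symm.injective.ne h3) (e.symm.injective.ne h4)]

theorem Function.Semiconj.chordsCross_swap_left (he : Semiconj e (· + 1) f) {x x' : α} (hx : x ≠ x')
    (y y' : α) : ChordsCross f x' x y y' ↔ ChordsCross f x x' y y' := by
  have hx' := e.symm.injective.ne hx
  simp only [ChordsCross, he.reachesBefore_iff, val_sub_lt_val_sub_iff_not hx']
  tauto

end CycleParametrization

namespace RibbonGraph

open Function Relation Finset Fin

variable {n : ℕ} {Γ : RibbonGraph n} {A B S : Finset (Fin (2 * n))}

@[simp]
theorem σ1_σ1 (x : Fin (2 * n)) : Γ.σ1 (Γ.σ1 x) = x := by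
  simpa using congrArg (· x) Γ.invol

theorem σ1_ne_of_ne_σ1 {x y : Fin (2 * n)} (h : x ≠ Γ.σ1 y) : Γ.σ1 x ≠ y :=
  fun hxy => h (by rw [← hxy, σ1_σ1])

theorem Closed.σ1_mem_iff (hA : Γ.Closed A) {x : Fin (2 * n)} : Γ.σ1 x ∈ A ↔ x ∈ A :=
  ⟨fun h => σ1_σ1 (Γ := Γ) x ▸ hA _ h, hA x⟩

theorem Closed.union (hA : Γ.Closed A) (hB : Γ.Closed B) : Γ.Closed (A ∪ B) := by
  simp only [Closed, mem_union]
  exact fun i => Or.imp (hA i) (hB i)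

theorem Closed.symmDiff (hA : Γ.Closed A) (hB : Γ.Closed B) : Γ.Closed (A ∆ B) := by
  simp only [Closed, mem_symmDiff, hA.σ1_mem_iff, hB.σ1_mem_iff, imp_self, implies_true]

theorem Closed.card_eq_two_mul (hA : Γ.Closed A) : #A = 2 * #{i ∈ A | i < Γ.σ1 i} := by
  have hlt : ∀ i, ¬ i < Γ.σ1 i → Γ.σ1 i < i := fun i h =>
    lt_of_le_of_ne (not_lt.mp h) (Γ.fixfree i)
  have hswap : #{i ∈ A | ¬ i < Γ.σ1 i} = #{i ∈ A | i < Γ.σ1 i} := by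
    refine card_nbij' Γ.σ1 Γ.σ1 ?_ ?_ (fun i _ => σ1_σ1 i) (fun i _ => σ1_σ1 i) <;>
      intro i <;> simp only [coe_filter, Set.mem_ofPred_eq, σ1_σ1, hA.σ1_mem_iff]
    · exact fun h => ⟨h.1, hlt i h.2⟩
    · exact fun h => ⟨h.1, not_lt.mpr h.2.le⟩
  have := card_filter_add_card_filter_not (s := A) (fun i => i < Γ.σ1 i)
  omega

theorem Closed.eCount_eq (hA : Γ.Closed A) : Γ.eCount A = #{i ∈ A | i < Γ.σ1 i} := by
  rw [eCount, hA.card_eq_two_mul, Nat.mul_div_cancel_left _ two_pos]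

theorem eCount_union (hA : Γ.Closed A) (hB : Γ.Closed B) (hAB : Disjoint A B) :
    Γ.eCount (A ∪ B) = Γ.eCount A + Γ.eCount B := by
  simp only [eCount, card_union_of_disjoint hAB, hA.card_eq_two_mul, hB.card_eq_two_mul]
  omega

variable (Γ) in
def flip (A : Finset (Fin (2 * n))) (x : Fin (2 * n)) : Fin (2 * n) :=
  if x ∈ A then Γ.σ1 x else x

theorem bdryMap_eq_comp_flip (A : Finset (Fin (2 * n))) : Γ.bdryMap A = Γ.σ0 ∘ Γ.flip A := by
  funext x
  simp only [bdryMap, flip, comp_apply, apply_ite Γ.σ0]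

theorem Closed.flip_flip (hA : Γ.Closed A) (B : Finset (Fin (2 * n))) (x : Fin (2 * n)) :
    Γ.flip A (Γ.flip B x) = Γ.flip (A ∆ B) x := by
  unfold flip
  by_cases hxA : x ∈ A <;> by_cases hxB : x ∈ B <;>
    simp [hxA, hxB, hA.σ1_mem_iff, mem_symmDiff]

theorem Closed.bijective_bdryMap (hA : Γ.Closed A) : Bijective (Γ.bdryMap A) := by
  have hinv : Involutive (Γ.flip A) := fun x => by
    rw [hA.flip_flip, symmDiff_self, flip]
    exact if_neg (notMem_empty x)
  rw [bdryMap_eq_comp_flip]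
  exact Γ.σ0.bijective.comp hinv.bijective

theorem Closed.bdryMap_eq_comp_flip_symmDiff (hA : Γ.Closed A) (B : Finset (Fin (2 * n))) :
    Γ.bdryMap B = Γ.bdryMap A ∘ Γ.flip (A ∆ B) := by
  funext x
  rw [bdryMap_eq_comp_flip, bdryMap_eq_comp_flip, comp_apply, comp_apply, comp_apply,
    hA.flip_flip, symmDiff_symmDiff_cancel_left]

theorem exists_equiv_fin_semiconj_bdryMap (hA : Γ.Closed A) (hf : Γ.faces A = 1) :
    ∃ (p : ℕ) (_ : NeZero p) (e : Fin p ≃ Fin (2 * n)), Semiconj e (· + 1) (Γ.bdryMap A) := by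
  obtain ⟨q, -⟩ := Nat.card_eq_one_iff_exists.mp hf
  obtain ⟨x₀, -⟩ := Quot.exists_rep q
  exact exists_equiv_fin_semiconj_add_one (hA.bijective_bdryMap.injective.mem_periodicPts x₀)
    fun y => (sameOrbit_of_orbCountOf_eq_one hf x₀ y).exists_iterate_eq hA.bijective_bdryMap

theorem edgeOrd_σ1 (x : Fin (2 * n)) : Γ.edgeOrd (Γ.σ1 x) = Γ.edgeOrd x := by
  rw [edgeOrd, edgeOrd, σ1_σ1, min_comm]

theorem edgeOrd_ne {x y : Fin (2 * n)} (h1 : x ≠ y) (h2 : x ≠ Γ.σ1 y) :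
    Γ.edgeOrd x ≠ Γ.edgeOrd y := by
  have := val_ne_of_ne h1
  have := val_ne_of_ne h2
  have := val_ne_of_ne (σ1_ne_of_ne_σ1 h2)
  have := val_ne_of_ne (Γ.σ1.injective.ne h1)
  unfold edgeOrd
  omega

theorem crosses_σ1_left (hA : Γ.Closed A) (hf : Γ.faces A = 1) (x y : Fin (2 * n)) :
    Γ.Crosses A (Γ.σ1 x) y ↔ Γ.Crosses A x y := by
  obtain ⟨p, _, e, he⟩ := exists_equiv_fin_semiconj_bdryMap hA hf
  rw [Crosses, Crosses, σ1_σ1]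
  exact he.chordsCross_swap_left (Γ.fixfree x).symm _ _

theorem live_σ1_iff (hA : Γ.Closed A) (hf : Γ.faces A = 1) (x : Fin (2 * n)) :
    Γ.Live A (Γ.σ1 x) ↔ Γ.Live A x := by
  simp only [Live, edgeOrd_σ1, crosses_σ1_left hA hf]

theorem closed_deadIn (hA : Γ.Closed A) (hf : Γ.faces A = 1) : Γ.Closed (Γ.deadIn A) := by
  intro i hi
  simp only [deadIn, mem_filter, live_σ1_iff hA hf] at hi ⊢
  exact ⟨hA i hi.1, hi.2⟩

section Chords

variable {p : ℕ} {e : Fin p ≃ Fin (2 * n)}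

/-- The higher of two live edges does not cross the lower one, and crossing is symmetric. -/
theorem Live.sideOf_iff [NeZero p] (he : Semiconj e (· + 1) (Γ.bdryMap A)) {x y : Fin (2 * n)}
    (hx : Γ.Live A x) (hy : Γ.Live A y) (h1 : x ≠ y) (h2 : x ≠ Γ.σ1 y) :
    SideOf (e.symm x) (e.symm (Γ.σ1 x)) (e.symm y) ↔
      SideOf (e.symm x) (e.symm (Γ.σ1 x)) (e.symm (Γ.σ1 y)) := by
  have h3 := σ1_ne_of_ne_σ1 h2
  have h4 : Γ.σ1 x ≠ Γ.σ1 y := Γ.σ1.injective.ne h1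
  have ne : ∀ {a b : Fin (2 * n)}, a ≠ b → e.symm a ≠ e.symm b := e.symm.injective.ne
  rcases (edgeOrd_ne h1 h2).lt_or_gt with hlt | hlt
  · refine sideOf_comm (ne (Γ.fixfree y).symm) (ne (Γ.fixfree x).symm) (ne h1.symm) (ne h3.symm)
      (ne (σ1_ne_of_ne_σ1 h3.symm)) (ne h4.symm) ?_
    exact (he.not_chordsCross_iff h1 h2 h3 h4).mp (hy x hlt)
  · exact (he.not_chordsCross_iff h1.symm h3.symm (σ1_ne_of_ne_σ1 h3.symm) h4.symm).mp (hx y hlt)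

theorem Live.chordsApart [NeZero p] (he : Semiconj e (· + 1) (Γ.bdryMap A)) {x y : Fin (2 * n)}
    (hx : Γ.Live A x) (hy : Γ.Live A y) (h1 : x ≠ y) (h2 : x ≠ Γ.σ1 y) :
    ChordsApart (e.symm x, e.symm (Γ.σ1 x)) (e.symm y, e.symm (Γ.σ1 y)) :=
  have ne : ∀ {a b : Fin (2 * n)}, a ≠ b → e.symm a ≠ e.symm b := e.symm.injective.ne
  have h2' : y ≠ Γ.σ1 x := (σ1_ne_of_ne_σ1 h2).symm
  ⟨ne h1, ne h2, ne (σ1_ne_of_ne_σ1 h2), ne (Γ.σ1.injective.ne h1), hx.sideOf_iff he hy h1 h2,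
    hy.sideOf_iff he hx h1.symm h2'⟩

variable (Γ) in
/-- One chord per edge of `Δ`. -/
noncomputable def chordList (e : Fin p ≃ Fin (2 * n)) (Δ : Finset (Fin (2 * n))) :
    List (Fin p × Fin p) :=
  ({i ∈ Δ | i < Γ.σ1 i} : Finset _).toList.map fun i => (e.symm i, e.symm (Γ.σ1 i))

theorem mem_chordList {Δ : Finset (Fin (2 * n))} {c : Fin p × Fin p} :
    c ∈ Γ.chordList e Δ ↔ ∃ i ∈ Δ, i < Γ.σ1 i ∧ (e.symm i, e.symm (Γ.σ1 i)) = c := by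
  simp [chordList, and_assoc]

theorem length_chordList {Δ : Finset (Fin (2 * n))} (hΔ : Γ.Closed Δ) :
    (Γ.chordList e Δ).length = Γ.eCount Δ := by
  simp [chordList, hΔ.eCount_eq]

theorem isNoncrossing_chordList [NeZero p] (he : Semiconj e (· + 1) (Γ.bdryMap A))
    {Δ : Finset (Fin (2 * n))} (hΔ : ∀ i ∈ Δ, Γ.Live A i) : IsNoncrossing (Γ.chordList e Δ) := by
  refine ⟨fun c hc => ?_, List.pairwise_map.mpr ((nodup_toList _).pairwise_of_forall_ne ?_)⟩
  · obtain ⟨i, -, -, rfl⟩ := mem_chordList.mp hc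
    exact e.symm.injective.ne (Γ.fixfree i).symm
  · intro x hx y hy hxy
    simp only [mem_toList, mem_filter] at hx hy
    refine (hΔ x hx.1).chordsApart he (hΔ y hy.1) hxy fun h => ?_
    rw [h, σ1_σ1] at hx
    exact lt_asymm hx.2 hy.2

theorem flip_eq_chordSwap {Δ : Finset (Fin (2 * n))} (hΔ : Γ.Closed Δ)
    (hL : IsNoncrossing (Γ.chordList e Δ)) (x : Fin (2 * n)) :
    Γ.flip Δ x = e (chordSwap (Γ.chordList e Δ) (e.symm x)) := by
  by_cases hx : x ∈ Δ
  · rw [flip, if_pos hx]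
    rcases lt_or_gt_of_ne (Γ.fixfree x).symm with hlt | hlt
    · rw [(hL.chordSwap_apply (mem_chordList.mpr ⟨x, hx, hlt, rfl⟩)).1, e.apply_symm_apply]
    · have hc := mem_chordList (e := e).mpr ⟨Γ.σ1 x, hΔ x hx, by rwa [σ1_σ1], rfl⟩
      rw [σ1_σ1] at hc
      rw [(hL.chordSwap_apply hc).2, e.apply_symm_apply]
  · rw [flip, if_neg hx, chordSwap_apply_of_forall_ne, e.apply_symm_apply]
    intro c hc
    obtain ⟨i, hi, -, rfl⟩ := mem_chordList.mp hc
    exact ⟨e.symm.injective.ne (ne_of_mem_of_not_mem hi hx).symm,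
      e.symm.injective.ne (ne_of_mem_of_not_mem (hΔ i hi) hx).symm⟩

theorem bdryMap_eq_conj_surgery [NeZero p] (he : Semiconj e (· + 1) (Γ.bdryMap A)) (hA : Γ.Closed A)
    (hB : Γ.Closed B) (hL : IsNoncrossing (Γ.chordList e (A ∆ B))) :
    Γ.bdryMap B = e ∘ surgery (Γ.chordList e (A ∆ B)) ∘ e.symm := by
  funext x
  rw [hA.bdryMap_eq_comp_flip_symmDiff, comp_apply, flip_eq_chordSwap (hA.symmDiff hB) hL,
    ← he.eq]
  rfl

end Chords

theorem faces_eq_eCount_symmDiff_add_one (hA : Γ.Closed A) (hf : Γ.faces A = 1)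
    (hB : Γ.Closed B) (hlive : ∀ i ∈ A ∆ B, Γ.Live A i) :
    Γ.faces B = Γ.eCount (A ∆ B) + 1 := by
  obtain ⟨p, _, e, he⟩ := exists_equiv_fin_semiconj_bdryMap hA hf
  have hL := isNoncrossing_chordList he hlive
  rw [faces, bdryMap_eq_conj_surgery he hA hB hL, orbCountOf_conj, hL.orbCountOf_surgery,
    length_chordList (hA.symmDiff hB)]

theorem sameOrbit_bdryMap_σ1 (hA : Γ.Closed A) (hf : Γ.faces A = 1) (hB : Γ.Closed B)
    (hlive : ∀ i ∈ A ∆ B, Γ.Live A i) {x : Fin (2 * n)} (hx : Γ.Live A x) (hxΔ : x ∉ A ∆ B) :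
    SameOrbit (Γ.bdryMap B) x (Γ.σ1 x) := by
  obtain ⟨p, _, e, he⟩ := exists_equiv_fin_semiconj_bdryMap hA hf
  have hL := isNoncrossing_chordList he hlive
  have hside : sideVector (Γ.chordList e (A ∆ B)) (e.symm x) =
      sideVector (Γ.chordList e (A ∆ B)) (e.symm (Γ.σ1 x)) := by
    refine List.map_congr_left fun c hc => decide_eq_decide.mpr ?_
    obtain ⟨i, hi, -, rfl⟩ := mem_chordList.mp hc
    exact (hlive i hi).sideOf_iff he hx (ne_of_mem_of_not_mem hi hxΔ)
      fun h => hxΔ ((hA.symmDiff hB).σ1_mem_iff.mp (h ▸ hi))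
  rw [bdryMap_eq_conj_surgery he hA hB hL]
  simpa using (hL.sameOrbit_of_sideVector_eq hside).conj e

theorem SameOrbit.eqvGen_compRel {x y : Fin (2 * n)} (h : SameOrbit (Γ.bdryMap B) x y) :
    EqvGen (Γ.compRel B) x y := by
  refine (EqvGen.is_equivalence _).eqvGen_iff.mp (EqvGen.mono (fun u v huv => ?_) x y h)
  simp only [bdryMap] at huv
  split_ifs at huv with hu
  · exact EqvGen.trans _ (Γ.σ1 u) _ (.rel _ _ (Or.inr ⟨hu, rfl⟩)) (.rel _ _ (Or.inl huv))
  · exact .rel _ _ (Or.inl huv)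

theorem kComp_union_eq (hS : ∀ x ∈ S, SameOrbit (Γ.bdryMap B) x (Γ.σ1 x)) :
    Γ.kComp (B ∪ S) = Γ.kComp B := by
  refine card_quot_eq_of_forall_eqvGen ?_ fun x y h =>
    .rel _ _ (h.imp_right fun h => ⟨mem_union_left _ h.1, h.2⟩)
  rintro x y (h | ⟨hx, rfl⟩)
  · exact .rel _ _ (Or.inl h)
  · rcases mem_union.mp hx with hx | hx
    · exact .rel _ _ (Or.inr ⟨hx, rfl⟩)
    · exact SameOrbit.eqvGen_compRel (hS x hx)

theorem faces_union_of_live (hA : Γ.Closed A) (hf : Γ.faces A = 1) (hB : Γ.Closed B)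
    (hlive : ∀ i ∈ A ∆ B, Γ.Live A i) (hS : Γ.Closed S) (hSlive : ∀ i ∈ S, Γ.Live A i)
    (hAS : Disjoint A S) (hBS : Disjoint B S) :
    Γ.faces (B ∪ S) = Γ.faces B + Γ.eCount S := by
  have hΔS := hAS.symmDiff_left hBS
  have hΔ : A ∆ (B ∪ S) = A ∆ B ∪ S := by
    rw [← sup_eq_union, ← hBS.symmDiff_eq_sup, ← symmDiff_assoc, hΔS.symmDiff_eq_sup,
      sup_eq_union]
  have hlive' : ∀ i ∈ A ∆ (B ∪ S), Γ.Live A i := by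
    rw [hΔ]
    exact fun i hi => (mem_union.mp hi).elim (hlive i) (hSlive i)
  rw [faces_eq_eCount_symmDiff_add_one hA hf (hB.union hS) hlive', hΔ,
    eCount_union (hA.symmDiff hB) hS hΔS, faces_eq_eCount_symmDiff_add_one hA hf hB hlive]
  ring

theorem kComp_union_of_live (hA : Γ.Closed A) (hf : Γ.faces A = 1) (hB : Γ.Closed B)
    (hlive : ∀ i ∈ A ∆ B, Γ.Live A i) (hSlive : ∀ i ∈ S, Γ.Live A i)
    (hAS : Disjoint A S) (hBS : Disjoint B S) :
    Γ.kComp (B ∪ S) = Γ.kComp B :=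
  kComp_union_eq fun x hx => sameOrbit_bdryMap_σ1 hA hf hB hlive (hSlive x hx) fun hxΔ =>
    (mem_symmDiff.mp hxΔ).elim (fun h => disjoint_left.mp hAS h.1 hx)
      fun h => disjoint_left.mp hBS h.1 hx

theorem deadIn_subset : Γ.deadIn A ⊆ A := by
  classical
  exact filter_subset _ _

theorem live_of_mem_of_notMem_deadIn {i : Fin (2 * n)} (hi : i ∈ A) (hd : i ∉ Γ.deadIn A) :
    Γ.Live A i := by
  classical
  simpa [deadIn, hi] using hd

end RibbonGraph

theorem stmt9_general {n : ℕ} (Γ : RibbonGraph n)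
    (A : Finset (Fin (2 * n))) (hA : Γ.IsQuasiTree A)
    (S1 S2 : Finset (Fin (2 * n)))
    (hS1 : ∀ i ∈ S1, i ∈ A ∧ Γ.Live A i) (hS1c : Γ.Closed S1)
    (hS2 : ∀ i ∈ S2, i ∉ A ∧ Γ.Live A i) (hS2c : Γ.Closed S2) :
    Γ.kComp (Γ.deadIn A ∪ S1 ∪ S2) = Γ.kComp (Γ.deadIn A ∪ S1) ∧
    Γ.nullity (Γ.deadIn A ∪ S1 ∪ S2) = Γ.nullity (Γ.deadIn A ∪ S1) + (Γ.eCount S2 : ℤ) ∧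
    Γ.twoGenus (Γ.deadIn A ∪ S1 ∪ S2) = Γ.twoGenus (Γ.deadIn A ∪ S1) := by
  obtain ⟨hAc, -, hf⟩ := hA
  set B := Γ.deadIn A ∪ S1
  have hBA : B ⊆ A := Finset.union_subset RibbonGraph.deadIn_subset fun i hi => (hS1 i hi).1
  have hBc : Γ.Closed B := (RibbonGraph.closed_deadIn hAc hf).union hS1c
  have hlive : ∀ i ∈ A ∆ B, Γ.Live A i := by
    rw [symmDiff_of_ge hBA]
    exact fun i hi => RibbonGraph.live_of_mem_of_notMem_deadIn (Finset.mem_sdiff.mp hi).1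
      fun hd => (Finset.mem_sdiff.mp hi).2 (Finset.mem_union_left _ hd)
  have hAS : Disjoint A S2 := Finset.disjoint_right.mpr fun i hi => (hS2 i hi).1
  have hBS : Disjoint B S2 := hAS.mono_left hBA
  have hS2live : ∀ i ∈ S2, Γ.Live A i := fun i hi => (hS2 i hi).2
  have hk := RibbonGraph.kComp_union_of_live hAc hf hBc hlive hS2live hAS hBS
  have hfaces := RibbonGraph.faces_union_of_live hAc hf hBc hlive hS2c hS2live hAS hBS
  have he := RibbonGraph.eCount_union hBc hS2c hBS
  refine ⟨hk, ?_, ?_⟩ <;> simp only [RibbonGraph.nullity, RibbonGraph.twoGenus, hk, hfaces, he] <;>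
    push_cast <;> ring

/-- For a quasi-tree `A` with internally dead subgraph `D = deadIn A`,
a set `S1` of internally live edges and a set `S2` of externally live edges:
`k(D ∪ S1 ∪ S2) = k(D ∪ S1)`, `n(D ∪ S1 ∪ S2) = n(D ∪ S1) + |S2|`, and
`g(D ∪ S1 ∪ S2) = g(D ∪ S1)`. -/
theorem stmt9 {n : ℕ} (Γ : RibbonGraph n) (hΓ : Γ.Connected)
    (A : Finset (Fin (2 * n))) (hA : Γ.IsQuasiTree A)
    (S1 S2 : Finset (Fin (2 * n)))
    (hS1 : ∀ i ∈ S1, i ∈ A ∧ Γ.Live A i) (hS1c : Γ.Closed S1)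
    (hS2 : ∀ i ∈ S2, i ∉ A ∧ Γ.Live A i) (hS2c : Γ.Closed S2) :
    Γ.kComp (Γ.deadIn A ∪ S1 ∪ S2) = Γ.kComp (Γ.deadIn A ∪ S1) ∧
    Γ.nullity (Γ.deadIn A ∪ S1 ∪ S2) = Γ.nullity (Γ.deadIn A ∪ S1) + (Γ.eCount S2 : ℤ) ∧
    Γ.twoGenus (Γ.deadIn A ∪ S1 ∪ S2) = Γ.twoGenus (Γ.deadIn A ∪ S1) :=
  stmt9_general Γ A hA S1 S2 hS1 hS1c hS2 hS2c
end
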